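/- arXiv:1705.10439 — 3 statements merged into one kernel-verified Lean document; each statement's English description precedes it below -/
import Mathlib

section
/- Let L = I + A be an invertible symmetric real n×n matrix with A having zero diagonal. If tr(L - L^{-1}) ≥ 0 and A ≠ 0, then g = L^{-1} is not positive definite. -/
/-!
Positive definiteness of `g = L⁻¹` passes to `L = g⁻¹`, so `L`, and with it `A = L - 1`, is
symmetric. Expanding `A g A = (L - 1) g (L - 1) = L - 2 + g` and using `tr A = 0` gives
`tr (L - g) = -tr (Aᵀ g A)`, and `Aᵀ g A` is positive semidefinite with positive trace as soon as
`A ≠ 0`.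
-/

open scoped ComplexOrder Matrix

namespace Matrix

variable {n m : Type*} [Fintype n] [Fintype m]

theorem PosDef.conjTranspose_mul_mul_same_eq_zero_iff {𝕜 : Type*} [RCLike 𝕜]
    {M : Matrix n n 𝕜} (hM : M.PosDef) {B : Matrix n m 𝕜} :
    Bᴴ * M * B = 0 ↔ B = 0 := by
  refine ⟨fun h ↦ ext_iff_mulVec.mpr fun x ↦ ?_, fun h ↦ by simp [h]⟩
  by_contra hx
  rw [zero_mulVec] at hx
  have hq := hM.dotProduct_mulVec_pos hx
  have hform : star x ⬝ᵥ ((Bᴴ * M * B) *ᵥ x) = star (B *ᵥ x) ⬝ᵥ (M *ᵥ (B *ᵥ x)) := by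
    simp only [star_mulVec, dotProduct_mulVec, vecMul_vecMul, ← mulVec_mulVec]
  rw [← hform, h, zero_mulVec, dotProduct_zero] at hq
  exact hq.false

theorem PosDef.trace_conjTranspose_mul_mul_same_pos {𝕜 : Type*} [RCLike 𝕜]
    {M : Matrix n n 𝕜} (hM : M.PosDef) {B : Matrix n m 𝕜} (hB : B ≠ 0) :
    0 < (Bᴴ * M * B).trace := by
  have hpsd := hM.posSemidef.conjTranspose_mul_mul_same B
  refine hpsd.trace_nonneg.lt_of_ne' fun h ↦ hB ?_
  exact hM.conjTranspose_mul_mul_same_eq_zero_iff.mp (hpsd.trace_eq_zero_iff.mp h)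

variable [DecidableEq n] {R : Type*} [CommRing R]

theorem sub_one_mul_inv_mul_sub_one {L : Matrix n n R} (hL : IsUnit L.det) :
    (L - 1) * L⁻¹ * (L - 1) = L - 2 + L⁻¹ := by
  rw [sub_mul, one_mul, mul_nonsing_inv L hL, sub_mul, one_mul, mul_sub, nonsing_inv_mul L hL,
    mul_one, ← one_add_one_eq_two]
  abel

theorem trace_one_add_sub_inv {A : Matrix n n R} (hA : IsUnit (1 + A).det) :
    trace ((1 + A) - (1 + A)⁻¹) = 2 * trace A - trace (A * (1 + A)⁻¹ * A) := by
  have h := sub_one_mul_inv_mul_sub_one hA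
  rw [add_sub_cancel_left, ← one_add_one_eq_two] at h
  rw [h]
  simp only [trace_sub, trace_add]
  ring

end Matrix

theorem stmt5_general (n : ℕ) (A : Matrix (Fin n) (Fin n) ℝ)
    (hdiag : ∀ i, A i i = 0) (hA : A ≠ 0)
    (htr : 0 ≤ Matrix.trace (((1 : Matrix (Fin n) (Fin n) ℝ) + A) -
      ((1 : Matrix (Fin n) (Fin n) ℝ) + A)⁻¹)) :
    ¬ (((1 : Matrix (Fin n) (Fin n) ℝ) + A)⁻¹).PosDef := by
  intro hg
  have hL : (1 + A).PosDef := Matrix.posDef_inv_iff.mp hg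
  have hAsymm : Aᴴ = A := by
    simpa [Matrix.conjTranspose_add] using hL.isHermitian.eq
  have hunit : IsUnit (1 + A).det := (Matrix.isUnit_iff_isUnit_det _).mp hL.isUnit
  have htrA : A.trace = 0 := Finset.sum_eq_zero fun i _ ↦ hdiag i
  have hpos := hg.trace_conjTranspose_mul_mul_same_pos hA
  rw [hAsymm] at hpos
  rw [Matrix.trace_one_add_sub_inv hunit, htrA] at htr
  linarith

/-- If `L = I + A` is invertible and symmetric with `A` nonzero and zero
diagonal, and `tr(L - L⁻¹) ≥ 0`, then `g = L⁻¹` is not positive definite. -/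
theorem stmt5 (n : ℕ) (A : Matrix (Fin n) (Fin n) ℝ) (hsymm : A.IsSymm)
    (hdiag : ∀ i, A i i = 0) (hA : A ≠ 0)
    (hinv : IsUnit ((1 : Matrix (Fin n) (Fin n) ℝ) + A).det)
    (htr : 0 ≤ Matrix.trace (((1 : Matrix (Fin n) (Fin n) ℝ) + A) -
      ((1 : Matrix (Fin n) (Fin n) ℝ) + A)⁻¹)) :
    ¬ (((1 : Matrix (Fin n) (Fin n) ℝ) + A)⁻¹).PosDef :=
  stmt5_general n A hdiag hA htr
end

section
/- For a finite simple graph G with no triangles (equipped with the flag complex, so its faces are vertices and edges), Σ_{x ∈ V(G_1)} χ(S(x)) = 4 v_1(G), where v_1(G) is the number of edges of G and G_1 is the Barycentric refinement. -/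
/-!
Triangle-freeness makes the face poset of `G` have height two: faces have one or two vertices,
so no three faces form a chain. Hence every sphere `S(x)` of the Barycentric refinement is
edgeless and `χ(S(x))` is the degree of `x` in `G_1`. Summing degrees counts each strict
inclusion `x ⊂ y` of faces twice, and a face `y` contains `2 ^ |y| - 2` proper faces: two for an
edge, none for a vertex. The total is therefore `2 · 2 · v_1(G)`.
-/

open scoped Classical

/-- Euler characteristic of the flag (Whitney) complex of a finite simple graph:
the alternating sum over all nonempty cliques. -/
noncomputable def eulerChar {V : Type*} [Fintype V] (G : SimpleGraph V) : ℤ :=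
  ∑ s : Finset V, if s.Nonempty ∧ G.IsClique (s : Set V) then (-1 : ℤ) ^ (s.card - 1) else 0

open Finset

theorem eulerChar_bot {W : Type*} [Fintype W] :
    eulerChar (⊥ : SimpleGraph W) = Fintype.card W := by
  have hsingleton (s : Finset W) :
      (s.Nonempty ∧ (⊥ : SimpleGraph W).IsClique (s : Set W)) ↔ #s = 1 := by
    rw [SimpleGraph.isClique_bot_iff, ← card_pos, ← card_le_one_iff_subsingleton]
    omega
  calc eulerChar (⊥ : SimpleGraph W)
      = ∑ s : Finset W, if #s = 1 then 1 else 0 := by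
        refine sum_congr rfl fun s _ => ?_
        simp_rw [hsingleton]
        split_ifs with h <;> simp [h]
    _ = #(powersetCard 1 (univ : Finset W)) := by
        rw [sum_boole, powersetCard_eq_filter, powerset_univ]
    _ = Fintype.card W := by simp

section Comparability

variable {α : Type*} [PartialOrder α] {H : SimpleGraph α}

theorem sum_degree_eq_two_mul_sum_card_lt [Fintype α] [DecidableLT α]
    (hH : ∀ x y, H.Adj x y ↔ x < y ∨ y < x) :
    ∑ x, H.degree x = 2 * ∑ y : α, #{x | x < y} := by
  have hdeg (x : α) : H.degree x = #{y | x < y} + #{y | y < x} := by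
    rw [← H.card_neighborFinset_eq_degree, SimpleGraph.neighborFinset_eq_filter]
    simp_rw [hH, filter_or]
    exact card_union_of_disjoint (disjoint_filter.2 fun y _ hxy hyx => lt_asymm hxy hyx)
  have hswap : ∑ x : α, #{y | x < y} = ∑ y : α, #{x | x < y} :=
    sum_card_bipartiteAbove_eq_sum_card_bipartiteBelow (· < ·)
  rw [sum_congr rfl fun x _ => hdeg x, sum_add_distrib, hswap, two_mul]

theorem induce_neighborSet_eq_bot (hH : ∀ x y, H.Adj x y ↔ x < y ∨ y < x)
    (hchain : ∀ a b c : α, a < b → b < c → False) (x : α) :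
    H.induce (H.neighborSet x) = ⊥ := by
  ext ⟨y, hy⟩ ⟨z, hz⟩
  simp only [SimpleGraph.comap_adj, Function.Embedding.coe_subtype, SimpleGraph.bot_adj, iff_false]
  intro hyz
  rw [SimpleGraph.mem_neighborSet, hH] at hy hz
  rw [hH] at hyz
  rcases hy with hy | hy <;> rcases hz with hz | hz <;> rcases hyz with hyz | hyz <;>
    first
    | exact hchain _ _ _ hy hyz | exact hchain _ _ _ hz hyz
    | exact hchain _ _ _ hyz hy | exact hchain _ _ _ hyz hz
    | exact hchain _ _ _ hy hz | exact hchain _ _ _ hz hy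

end Comparability

namespace SimpleGraph

variable {V : Type*} {G : SimpleGraph V}

theorem IsClique.card_lt_of_cliqueFree {n : ℕ} {s : Finset V} (hG : G.CliqueFree n)
    (hs : G.IsClique (s : Set V)) : #s < n := by
  by_contra! hn
  obtain ⟨t, hts, ht⟩ := exists_subset_card_eq hn
  exact hG t ⟨hs.subset (by exact_mod_cast hts), ht⟩

variable [Fintype V] [DecidableEq V]

theorem card_cliqueFinset_two [DecidableRel G.Adj] [Fintype G.edgeSet] :
    #(G.cliqueFinset 2) = #G.edgeFinset := by
  have himage : G.cliqueFinset 2 = G.edgeFinset.image Sym2.toFinset := by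
    ext s
    simp only [mem_cliqueFinset_iff, isNClique_iff, mem_image, mem_edgeFinset]
    constructor
    · rintro ⟨hs, hcard⟩
      obtain ⟨a, b, hab, rfl⟩ := card_eq_two.1 hcard
      exact ⟨s(a, b), isClique_pair.1 (by simpa using hs) hab, Sym2.toFinset_mk_eq⟩
    · rintro ⟨e, he, rfl⟩
      induction e with
      | h a b =>
        rw [Sym2.toFinset_mk_eq]
        exact ⟨by simpa using isClique_pair.2 fun _ => he, card_pair he.ne⟩
  rw [himage, card_image_of_injective _ fun e e' h => Sym2.ext fun x => by
    simpa using congr(x ∈ $h)]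

end SimpleGraph

section FacePoset

variable {V : Type*} {G : SimpleGraph V} {faces : Finset (Finset V)}

theorem not_lt_lt_of_cliqueFree_three (htf : G.CliqueFree 3)
    (hfaces : ∀ s, s ∈ faces ↔ s.Nonempty ∧ G.IsClique (s : Set V))
    (a b c : {s // s ∈ faces}) (hab : a < b) (hbc : b < c) : False := by
  have ha := ((hfaces a.1).1 a.2).1.card_pos
  have hc := ((hfaces c.1).1 c.2).2.card_lt_of_cliqueFree htf
  have := card_lt_card hab
  have := card_lt_card hbc
  omega

theorem card_filter_lt_eq_two_pow_sub_two [Fintype V] [DecidableEq V]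
    (hfaces : ∀ s, s ∈ faces ↔ s.Nonempty ∧ G.IsClique (s : Set V))
    (y : {s // s ∈ faces}) :
    #{x | x < y} = 2 ^ #y.1 - 2 := by
  have hproper : #{x | x < y} = #((y.1.ssubsets).erase ∅) := by
    refine card_bij (fun x _ => x.1) (fun x hx => ?_) (fun x _ x' _ => Subtype.ext)
      (fun s hs => ?_)
    · rw [mem_filter] at hx
      exact mem_erase.2 ⟨((hfaces x.1).1 x.2).1.ne_empty, mem_ssubsets.2 hx.2⟩
    · obtain ⟨hne, hsy⟩ := mem_erase.1 hs
      have hsy := mem_ssubsets.1 hsy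
      have hclique : G.IsClique (s : Set V) :=
        ((hfaces y.1).1 y.2).2.subset (by exact_mod_cast hsy.subset)
      exact ⟨⟨s, (hfaces s).2 ⟨nonempty_iff_ne_empty.2 hne, hclique⟩⟩,
        mem_filter.2 ⟨mem_univ _, hsy⟩, rfl⟩
  rw [hproper, card_erase_of_mem (empty_mem_ssubsets ((hfaces y.1).1 y.2).1), ssubsets,
    card_erase_of_mem (mem_powerset_self _), card_powerset, Nat.sub_sub]

theorem sum_two_pow_card_sub_two_of_cliqueFree_three [Fintype V] [DecidableEq V]
    (htf : G.CliqueFree 3)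
    (hfaces : ∀ s, s ∈ faces ↔ s.Nonempty ∧ G.IsClique (s : Set V)) :
    ∑ y : {s // s ∈ faces}, (2 ^ #y.1 - 2) = 2 * #G.edgeFinset := by
  have hedges : faces.filter (#· = 2) = G.cliqueFinset 2 := by
    ext s
    simp only [mem_filter, hfaces, SimpleGraph.mem_cliqueFinset_iff, SimpleGraph.isNClique_iff]
    constructor
    · exact fun ⟨⟨_, hs⟩, hcard⟩ => ⟨hs, hcard⟩
    · exact fun ⟨hs, hcard⟩ => ⟨⟨card_pos.1 (by omega), hs⟩, hcard⟩
  calc ∑ y : {s // s ∈ faces}, (2 ^ #y.1 - 2)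
      = ∑ s ∈ faces, if #s = 2 then 2 else 0 := by
        rw [sum_coe_sort faces fun s => 2 ^ #s - 2]
        refine sum_congr rfl fun s hs => ?_
        obtain ⟨hne, hs⟩ := (hfaces s).1 hs
        have := hne.card_pos
        have := hs.card_lt_of_cliqueFree htf
        interval_cases #s <;> rfl
    _ = 2 * #G.edgeFinset := by
        rw [← sum_filter, sum_const, hedges, SimpleGraph.card_cliqueFinset_two, smul_eq_mul,
          mul_comm]

end FacePoset

/-- For a triangle-free finite simple graph `G` (whose flag complex has as
faces exactly the vertices and edges, i.e. the nonempty cliques),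
`Σ_{x ∈ V(G_1)} χ(S(x)) = 4 v_1(G)` where `v_1(G)` is the number of edges of `G` and
`G_1` is the Barycentric refinement. -/
theorem stmt8 {V : Type*} [Fintype V] [DecidableEq V] (G : SimpleGraph V)
    (htf : G.CliqueFree 3)
    (faces : Finset (Finset V))
    (hfaces : faces = Finset.univ.filter fun s : Finset V =>
        s.Nonempty ∧ G.IsClique (s : Set V))
    (G1 : SimpleGraph {x // x ∈ faces})
    (hG1 : ∀ x y : {x // x ∈ faces}, G1.Adj x y ↔ x.1 ⊂ y.1 ∨ y.1 ⊂ x.1) :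
    ∑ x : {x // x ∈ faces}, eulerChar (G1.induce (G1.neighborSet x)) =
      4 * (G.edgeFinset.card : ℤ) := by
  have hmem (s : Finset V) : s ∈ faces ↔ s.Nonempty ∧ G.IsClique (s : Set V) := by
    simp [hfaces]
  have hlink (x : {x // x ∈ faces}) : eulerChar (G1.induce (G1.neighborSet x)) = G1.degree x := by
    rw [induce_neighborSet_eq_bot hG1 (not_lt_lt_of_cliqueFree_three htf hmem) x, eulerChar_bot,
      SimpleGraph.card_neighborSet_eq_degree]
  have hdegrees : ∑ x, G1.degree x = 4 * #G.edgeFinset := calc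
    ∑ x, G1.degree x = 2 * ∑ y : {x // x ∈ faces}, (2 ^ #y.1 - 2) := by
      rw [sum_degree_eq_two_mul_sum_card_lt hG1]
      exact congrArg _ (sum_congr rfl fun y _ => card_filter_lt_eq_two_pow_sub_two hmem y)
    _ = 4 * #G.edgeFinset := by
      rw [sum_two_pow_card_sub_two_of_cliqueFree_three htf hmem]
      ring
  simp_rw [hlink]
  exact_mod_cast hdegrees
end

section
/- The f-vector of the Barycentric refinement G_1 of a finite abstract simplicial complex G is obtained from the f-vector of G by the matrix S with entries S_{ij} = i! · Stirling2(j, i) (Stirling numbers of the second kind): v_{i-1}(G_1) = Σ_j i! · Stirling2(j,i) · v_{j-1}(G); moreover the vector (1, -1, 1, -1, ...) is a left eigenvector of S with eigenvalue 1, so χ(G_1) = χ(G). -/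
open scoped Classical

/-- Stirling numbers of the second kind: `stirling2 n k` counts the partitions of an
`n`-element set into `k` nonempty blocks. -/
def stirling2 : ℕ → ℕ → ℕ
  | 0, 0 => 1
  | 0, _ + 1 => 0
  | _ + 1, 0 => 0
  | n + 1, k + 1 => (k + 1) * stirling2 n (k + 1) + stirling2 n k

/-!
A face of the barycentric refinement is a chain of faces of `G`; group the chains by their
top face `x`. Removing the top of a chain with `i + 1` members leaves a chain with `i` members
topped by some proper subset of `x`, so the number `c(n, i)` of chains of nonempty sets with top a
given `n`-set satisfies `c(n, i + 1) = ∑_{m < n} (n choose m) c(m, i)`. The numbers `i! S(n, i)`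
obey the same recursion (the binomial recurrence for Stirling numbers), and `c(n, 1) = S(n, 1)`.

The alternating sum `∑ (-1)^i i! S(n, i) = (-1)^n` telescopes under the recurrence
`S(n + 1, i + 1) = (i + 1) S(n, i + 1) + S(n, i)`; summing it against the chain count of every
face gives `χ(G_1) = χ(G)`.
-/

open Finset Nat

theorem stirling2_eq_stirlingSecond : stirling2 = stirlingSecond := by
  funext n k
  induction n generalizing k <;> cases k <;> simp_all [stirling2, stirlingSecond]

namespace Nat

theorem stirlingSecond_succ_succ_eq_sum_choose (n k : ℕ) :
    (n + 1).stirlingSecond (k + 1) = ∑ m ∈ range (n + 1), n.choose m * m.stirlingSecond k := by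
  induction n generalizing k with
  | zero => simp [stirlingSecond_succ_succ]
  | succ n ih =>
    cases k with
    | zero => simp [sum_range_succ', stirlingSecond_one_right]
    | succ k =>
      have h := sum_choose_succ_mul (R := ℕ) (fun m _ => m.stirlingSecond (k + 1)) n
      simp only [Nat.cast_id] at h
      rw [h, stirlingSecond_succ_succ (n + 1) (k + 1), ih (k + 1), ih k]
      simp only [stirlingSecond_succ_succ, mul_add, sum_add_distrib, mul_left_comm _ (k + 1),
        ← mul_sum]
      ring

theorem factorial_mul_stirlingSecond_succ (n k : ℕ) :
    (k + 1)! * n.stirlingSecond (k + 1) =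
      ∑ m ∈ range n, n.choose m * (k ! * m.stirlingSecond k) := by
  have h := stirlingSecond_succ_succ_eq_sum_choose n k
  rw [sum_range_succ, choose_self, one_mul, stirlingSecond_succ_succ] at h
  calc (k + 1)! * n.stirlingSecond (k + 1) = k ! * ((k + 1) * n.stirlingSecond (k + 1)) := by
        rw [factorial_succ]; ring
    _ = ∑ m ∈ range n, n.choose m * (k ! * m.stirlingSecond k) := by
        rw [Nat.add_right_cancel h, mul_sum]
        simp only [mul_left_comm]

theorem sum_range_neg_one_pow_mul_factorial_mul_stirlingSecond (n : ℕ) :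
    ∑ i ∈ range (n + 1), (-1 : ℤ) ^ i * (i ! * n.stirlingSecond i : ℕ) = (-1) ^ n := by
  induction n with
  | zero => simp
  | succ n ih =>
    set u : ℕ → ℤ := fun i => (-1 : ℤ) ^ i * (i ! * n.stirlingSecond i : ℕ)
    -- the recurrence turns each summand into a telescoping difference minus the previous summand
    have hstep : ∀ i, (-1 : ℤ) ^ (i + 1) * ((i + 1)! * (n + 1).stirlingSecond (i + 1) : ℕ)
        = (((i + 1 : ℕ) : ℤ) * u (i + 1) - (i : ℤ) * u i) - u i := by
      intro i
      simp only [u, stirlingSecond_succ_succ, factorial_succ]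
      push_cast
      ring
    rw [sum_range_succ', sum_congr rfl fun i _ => hstep i, sum_sub_distrib,
      sum_range_sub (fun i => (i : ℤ) * u i), ih]
    simp [u, stirlingSecond_eq_zero_of_lt, pow_succ]

theorem sum_Icc_neg_one_pow_mul_factorial_mul_stirlingSecond {n : ℕ} (hn : 1 ≤ n) :
    ∑ i ∈ Icc 1 n, (-1 : ℤ) ^ (i + 1) * (i ! : ℤ) * (n.stirlingSecond i : ℤ) = (-1) ^ (n + 1) := by
  obtain ⟨m, rfl⟩ := Nat.exists_eq_add_of_le' hn
  have h := sum_range_neg_one_pow_mul_factorial_mul_stirlingSecond (m + 1)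
  rw [range_eq_Ico, sum_eq_sum_Ico_succ_bot (succ_pos _), zero_add, succ_eq_add_one,
    Ico_add_one_right_eq_Icc,
    stirlingSecond_succ_zero, mul_zero, cast_zero, mul_zero, zero_add] at h
  calc ∑ i ∈ Icc 1 (m + 1), (-1 : ℤ) ^ (i + 1) * (i ! : ℤ) * ((m + 1).stirlingSecond i : ℤ)
      = -∑ i ∈ Icc 1 (m + 1), (-1 : ℤ) ^ i * (i ! * (m + 1).stirlingSecond i : ℕ) := by
        rw [← sum_neg_distrib]
        refine sum_congr rfl fun i _ => ?_
        push_cast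
        ring
    _ = (-1) ^ (m + 1 + 1) := by rw [h, pow_succ _ (m + 1)]; ring

end Nat

theorem Finset.sum_ssubsets_apply_card {α M : Type*} [DecidableEq α] [AddCancelCommMonoid M]
    (f : ℕ → M) (x : Finset α) :
    ∑ y ∈ x.ssubsets, f #y = ∑ m ∈ range #x, (#x).choose m • f m := by
  have h := sum_powerset_apply_card f (x := x)
  rw [← add_sum_erase _ _ (mem_powerset_self x), sum_range_succ, choose_self, one_smul,
    add_comm] at h
  exact add_right_cancel h

theorem Finset.exists_isGreatest_of_isChain {α : Type*} [PartialOrder α] {s : Finset α}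
    (hc : IsChain (· ≤ ·) (s : Set α)) (hs : s.Nonempty) : ∃ x, IsGreatest (s : Set α) x := by
  obtain ⟨x, hx, hmax⟩ := s.exists_maximal hs
  refine ⟨x, hx, fun y hy => ?_⟩
  rcases eq_or_ne x y with rfl | hxy
  · exact le_rfl
  · exact (hc hx hy hxy).elim (fun h => hmax hy h) id

section Chains

variable {V : Type*} [DecidableEq V]

noncomputable def chainsWithTop (x : Finset V) : Finset (Finset (Finset V)) :=
  {S ∈ x.powerset.powerset | x ∈ S ∧ ∅ ∉ S ∧ IsChain (· ⊆ ·) (S : Set (Finset V))}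

variable {x y : Finset V} {S T : Finset (Finset V)}

theorem mem_chainsWithTop : S ∈ chainsWithTop x ↔
    S ⊆ x.powerset ∧ x ∈ S ∧ ∅ ∉ S ∧ IsChain (· ⊆ ·) (S : Set (Finset V)) := by
  rw [chainsWithTop, mem_filter, mem_powerset]

theorem subset_of_mem_chainsWithTop (hS : S ∈ chainsWithTop x) (hy : y ∈ S) : y ⊆ x :=
  mem_powerset.1 ((mem_chainsWithTop.1 hS).1 hy)

theorem pairwiseDisjoint_chainsWithTop (s : Set (Finset V)) :
    s.PairwiseDisjoint chainsWithTop := fun _ _ _ _ hxy =>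
  disjoint_left.2 fun _ hx hy => hxy <|
    (subset_of_mem_chainsWithTop hy (mem_chainsWithTop.1 hx).2.1).antisymm
      (subset_of_mem_chainsWithTop hx (mem_chainsWithTop.1 hy).2.1)

theorem notMem_of_mem_chainsWithTop (hT : T ∈ chainsWithTop y) (hyx : y ⊂ x) : x ∉ T :=
  fun hx => hyx.not_subset (subset_of_mem_chainsWithTop hT hx)

theorem insert_mem_chainsWithTop (hT : T ∈ chainsWithTop y) (hyx : y ⊂ x) :
    insert x T ∈ chainsWithTop x := by
  obtain ⟨hTy, hy, hTe, hTc⟩ := mem_chainsWithTop.1 hT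
  refine mem_chainsWithTop.2 ⟨insert_subset (mem_powerset_self x) fun z hz => ?_,
    mem_insert_self x T, ?_, ?_⟩
  · exact mem_powerset.2 ((subset_of_mem_chainsWithTop hT hz).trans hyx.subset)
  · rw [mem_insert, not_or]
    exact ⟨fun h => not_ssubset_empty y (h ▸ hyx), hTe⟩
  · rw [coe_insert]
    exact hTc.insert fun z hz _ => Or.inr ((subset_of_mem_chainsWithTop hT hz).trans hyx.subset)

theorem erase_mem_chainsWithTop (hS : S ∈ chainsWithTop x) (hne : (S.erase x).Nonempty) :
    ∃ y ⊂ x, S.erase x ∈ chainsWithTop y := by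
  obtain ⟨hSx, hx, hSe, hSc⟩ := mem_chainsWithTop.1 hS
  obtain ⟨y, hy, hmax⟩ := exists_isGreatest_of_isChain
    (hSc.mono (by simp only [coe_erase]; exact Set.sdiff_subset)) hne
  refine ⟨y, ?_, mem_chainsWithTop.2 ⟨fun z hz => mem_powerset.2 (hmax hz), hy,
    fun h => hSe (mem_of_mem_erase h), hSc.mono (by simp only [coe_erase]; exact Set.sdiff_subset)⟩⟩
  exact (subset_of_mem_chainsWithTop hS (mem_of_mem_erase hy)).ssubset_of_ne (ne_of_mem_erase hy)

theorem card_filter_chainsWithTop_one (x : Finset V) :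
    #{S ∈ chainsWithTop x | #S = 1} = (#x).stirlingSecond 1 := by
  rcases x.eq_empty_or_nonempty with rfl | hx
  · refine (card_eq_zero.2 (filter_eq_empty_iff.2 fun S hS => ?_)).trans (by simp)
    obtain ⟨-, h, h', -⟩ := mem_chainsWithTop.1 hS
    exact absurd h h'
  · have : {S ∈ chainsWithTop x | #S = 1} = {{x}} := by
      ext S
      simp only [mem_filter, mem_singleton, card_eq_one]
      constructor
      · rintro ⟨hS, a, rfl⟩
        rw [mem_singleton.1 (mem_chainsWithTop.1 hS).2.1]
      · rintro rfl
        refine ⟨mem_chainsWithTop.2 ⟨?_, mem_singleton_self x, ?_, ?_⟩, x, rfl⟩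
        · simp
        · simpa [eq_comm] using hx.ne_empty
        · simp
    obtain ⟨n, hn⟩ := exists_eq_succ_of_ne_zero hx.card_pos.ne'
    rw [this, hn, card_singleton, stirlingSecond_one_right]

theorem card_filter_chainsWithTop_add_two (x : Finset V) (i : ℕ) :
    #{S ∈ chainsWithTop x | #S = i + 2} =
      ∑ y ∈ x.ssubsets, #{T ∈ chainsWithTop y | #T = i + 1} := by
  rw [← card_biUnion ((pairwiseDisjoint_chainsWithTop _).mono fun y => filter_subset _ _)]
  refine card_nbij' (·.erase x) (insert x) (fun S hS => ?_) (fun T hT => ?_)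
    (fun S hS => ?_) (fun T hT => ?_)
  · obtain ⟨hS, hcard⟩ := mem_filter.1 hS
    have hcard' : #(S.erase x) = i + 1 := by
      rw [card_erase_of_mem (mem_chainsWithTop.1 hS).2.1, hcard]; rfl
    obtain ⟨y, hyx, hy⟩ := erase_mem_chainsWithTop hS (card_pos.1 (by omega))
    exact mem_biUnion.2 ⟨y, mem_ssubsets.2 hyx, mem_filter.2 ⟨hy, hcard'⟩⟩
  · obtain ⟨y, hyx, hT⟩ := mem_biUnion.1 hT
    obtain ⟨hT, hcard⟩ := mem_filter.1 hT
    rw [mem_ssubsets] at hyx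
    refine mem_filter.2 ⟨insert_mem_chainsWithTop hT hyx, ?_⟩
    rw [card_insert_of_notMem (notMem_of_mem_chainsWithTop hT hyx), hcard]
  · exact insert_erase (mem_chainsWithTop.1 (mem_filter.1 hS).1).2.1
  · obtain ⟨y, hyx, hT⟩ := mem_biUnion.1 hT
    exact erase_insert (notMem_of_mem_chainsWithTop (mem_filter.1 hT).1 (mem_ssubsets.1 hyx))

theorem card_filter_chainsWithTop (x : Finset V) {i : ℕ} (hi : 1 ≤ i) :
    #{S ∈ chainsWithTop x | #S = i} = i ! * (#x).stirlingSecond i := by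
  induction i, hi using Nat.le_induction generalizing x with
  | base => simpa using card_filter_chainsWithTop_one x
  | succ i hi ih =>
    obtain ⟨j, rfl⟩ := Nat.exists_eq_add_of_le' hi
    rw [card_filter_chainsWithTop_add_two, sum_congr rfl fun y _ => ih y,
      sum_ssubsets_apply_card (fun m => (j + 1)! * m.stirlingSecond (j + 1)),
      factorial_mul_stirlingSecond_succ]
    simp only [smul_eq_mul]

theorem sum_chainsWithTop_apply_card {M : Type*} [AddCommMonoid M] (F : ℕ → M) (x : Finset V) :
    ∑ S ∈ chainsWithTop x, F #S = ∑ i ∈ Icc 1 #x, (i ! * (#x).stirlingSecond i) • F i := by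
  -- a chain with more than `#x` members would be counted by `i ! * S(#x, i) = 0`
  have hmaps : ∀ S ∈ chainsWithTop x, #S ∈ Icc 1 #x := by
    intro S hS
    have h1 : 1 ≤ #S := card_pos.2 ⟨x, (mem_chainsWithTop.1 hS).2.1⟩
    have h2 : #{T ∈ chainsWithTop x | #T = #S} ≠ 0 := card_ne_zero.2 ⟨S, mem_filter.2 ⟨hS, rfl⟩⟩
    rw [card_filter_chainsWithTop x h1] at h2
    exact mem_Icc.2 ⟨h1, not_lt.1 fun h => h2 (by simp [stirlingSecond_eq_zero_of_lt h])⟩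
  rw [← sum_fiberwise_of_maps_to' hmaps]
  refine sum_congr rfl fun i hi => ?_
  rw [sum_const, card_filter_chainsWithTop x (mem_Icc.1 hi).1]

end Chains

section Cliques

variable {V : Type*} {G : Finset (Finset V)} {G1 : SimpleGraph {x // x ∈ G}}

theorem isClique_iff_isChain_map
    (hG1 : ∀ x y : {x // x ∈ G}, G1.Adj x y ↔ x.1 ⊂ y.1 ∨ y.1 ⊂ x.1) (s : Finset {x // x ∈ G}) :
    G1.IsClique (s : Set {x // x ∈ G}) ↔
      IsChain (· ⊆ ·)
        ((s.map (Function.Embedding.subtype _) : Finset (Finset V)) : Set (Finset V)) := by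
  rw [coe_map, Function.Embedding.coe_subtype, IsChain, Subtype.val_injective.injOn.pairwise_image,
    SimpleGraph.isClique_iff]
  refine forall₂_congr fun a _ => forall₂_congr fun b _ => forall_congr' fun hab => ?_
  have hab' : a.1 ≠ b.1 := Subtype.val_injective.ne hab
  rw [hG1, ssubset_iff_subset_ne, ssubset_iff_subset_ne]
  simp [hab', hab'.symm, Function.onFun]

theorem map_filter_isClique_eq_biUnion_chainsWithTop [DecidableEq V] (hne : ∀ x ∈ G, x ≠ ∅)
    (hdown : ∀ x ∈ G, ∀ y, y ⊆ x → y ≠ ∅ → y ∈ G)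
    (hG1 : ∀ x y : {x // x ∈ G}, G1.Adj x y ↔ x.1 ⊂ y.1 ∨ y.1 ⊂ x.1) :
    (univ.filter fun s : Finset {x // x ∈ G} => s.Nonempty ∧ G1.IsClique (s : Set {x // x ∈ G})).map
      (mapEmbedding (Function.Embedding.subtype _)).toEmbedding = G.biUnion chainsWithTop := by
  ext S
  simp only [mem_map, mem_filter, mem_univ, true_and, RelEmbedding.coe_toEmbedding,
    mapEmbedding_apply, mem_biUnion]
  constructor
  · rintro ⟨s, ⟨hs, hc⟩, rfl⟩
    rw [isClique_iff_isChain_map hG1] at hc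
    obtain ⟨x, hx, hmax⟩ := exists_isGreatest_of_isChain hc (hs.map)
    obtain ⟨⟨x, hxG⟩, -, rfl⟩ := mem_map.1 hx
    refine ⟨x, hxG, mem_chainsWithTop.2 ⟨fun y hy => mem_powerset.2 (hmax hy), hx, fun h => ?_, hc⟩⟩
    obtain ⟨⟨y, hyG⟩, -, hy⟩ := mem_map.1 h
    exact hne y hyG hy
  · rintro ⟨x, hxG, hS⟩
    obtain ⟨-, hxS, hSe, hSc⟩ := mem_chainsWithTop.1 hS
    have hSG : ∀ y ∈ S, y ∈ G := fun y hy =>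
      hdown x hxG y (subset_of_mem_chainsWithTop hS hy) (ne_of_mem_of_not_mem hy hSe)
    refine ⟨S.subtype (· ∈ G), ⟨⟨⟨x, hxG⟩, mem_subtype.2 hxS⟩, ?_⟩, subtype_map_of_mem hSG⟩
    rwa [isClique_iff_isChain_map hG1, subtype_map_of_mem hSG]

theorem sum_ite_isClique_eq_sum_chainsWithTop [DecidableEq V] {M : Type*} [AddCommMonoid M]
    (hne : ∀ x ∈ G, x ≠ ∅) (hdown : ∀ x ∈ G, ∀ y, y ⊆ x → y ≠ ∅ → y ∈ G)
    (hG1 : ∀ x y : {x // x ∈ G}, G1.Adj x y ↔ x.1 ⊂ y.1 ∨ y.1 ⊂ x.1) (F : ℕ → M) :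
    ∑ s : Finset {x // x ∈ G},
        (if s.Nonempty ∧ G1.IsClique (s : Set {x // x ∈ G}) then F #s else 0)
      = ∑ x ∈ G, ∑ S ∈ chainsWithTop x, F #S := by
  rw [← sum_filter, ← sum_biUnion (pairwiseDisjoint_chainsWithTop _),
    ← map_filter_isClique_eq_biUnion_chainsWithTop hne hdown hG1, sum_map]
  simp [card_map]

theorem card_isClique_eq_sum_factorial_mul_stirlingSecond [DecidableEq V]
    (hne : ∀ x ∈ G, x ≠ ∅) (hdown : ∀ x ∈ G, ∀ y, y ⊆ x → y ≠ ∅ → y ∈ G)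
    (hG1 : ∀ x y : {x // x ∈ G}, G1.Adj x y ↔ x.1 ⊂ y.1 ∨ y.1 ⊂ x.1) {i : ℕ} (hi : 1 ≤ i) :
    #{s : Finset {x // x ∈ G} | #s = i ∧ G1.IsClique (s : Set {x // x ∈ G})}
      = ∑ x ∈ G, i ! * (#x).stirlingSecond i := by
  calc #{s : Finset {x // x ∈ G} | #s = i ∧ G1.IsClique (s : Set {x // x ∈ G})}
      = ∑ s : Finset {x // x ∈ G}, if s.Nonempty ∧ G1.IsClique (s : Set {x // x ∈ G})
          then (if #s = i then 1 else 0) else 0 := by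
        rw [card_filter]
        refine sum_congr rfl fun s _ => ?_
        by_cases h : #s = i
        · simp [h, card_pos.1 (h ▸ hi)]
        · simp [h]
    _ = ∑ x ∈ G, i ! * (#x).stirlingSecond i := by
        rw [sum_ite_isClique_eq_sum_chainsWithTop hne hdown hG1 fun c => if c = i then 1 else 0]
        exact sum_congr rfl fun x _ => by rw [← card_filter, card_filter_chainsWithTop x hi]

theorem sum_ite_isClique_neg_one_pow [DecidableEq V]
    (hne : ∀ x ∈ G, x ≠ ∅) (hdown : ∀ x ∈ G, ∀ y, y ⊆ x → y ≠ ∅ → y ∈ G)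
    (hG1 : ∀ x y : {x // x ∈ G}, G1.Adj x y ↔ x.1 ⊂ y.1 ∨ y.1 ⊂ x.1) :
    ∑ s : Finset {x // x ∈ G},
        (if s.Nonempty ∧ G1.IsClique (s : Set {x // x ∈ G}) then (-1 : ℤ) ^ (#s - 1) else 0)
      = ∑ x ∈ G, (-1 : ℤ) ^ (#x - 1) := by
  have hsign : ∀ k, 1 ≤ k → (-1 : ℤ) ^ (k - 1) = (-1) ^ (k + 1) := fun k hk => by
    rw [show k + 1 = k - 1 + 2 by omega, pow_add]; simp
  rw [sum_ite_isClique_eq_sum_chainsWithTop hne hdown hG1 fun c => (-1 : ℤ) ^ (c - 1)]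
  refine sum_congr rfl fun x hx => ?_
  have hx1 : 1 ≤ #x := card_pos.2 (nonempty_iff_ne_empty.2 (hne x hx))
  rw [sum_chainsWithTop_apply_card (fun c => (-1 : ℤ) ^ (c - 1)), hsign _ hx1,
    ← sum_Icc_neg_one_pow_mul_factorial_mul_stirlingSecond hx1]
  refine sum_congr rfl fun k hk => ?_
  rw [hsign k (mem_Icc.1 hk).1, nsmul_eq_mul]
  push_cast
  ring

end Cliques

/-- The f-vector of the Barycentric refinement `G_1` of a finite abstract
simplicial complex `G` (whose faces are the chains of faces of `G`, i.e. the cliques of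
the inclusion graph) is obtained from the f-vector of `G` by
`v_{i-1}(G_1) = Σ_j i!·Stirling2(j,i)·v_{j-1}(G)`; moreover `(1,-1,1,-1,...)` is a left
eigenvector with eigenvalue `1`, i.e. `Σ_i (-1)^{i+1} i!·Stirling2(j,i) = (-1)^{j+1}`,
so that `χ(G_1) = χ(G)`. -/
theorem stmt19 {V : Type*} [Fintype V] [DecidableEq V] (G : Finset (Finset V))
    (hne : ∀ x ∈ G, x ≠ ∅)
    (hdown : ∀ x ∈ G, ∀ y, y ⊆ x → y ≠ ∅ → y ∈ G)
    (G1 : SimpleGraph {x // x ∈ G})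
    (hG1 : ∀ x y : {x // x ∈ G}, G1.Adj x y ↔ x.1 ⊂ y.1 ∨ y.1 ⊂ x.1)
    (v w : ℕ → ℕ)
    (hv : ∀ j, v j = (G.filter fun x => x.card = j).card)
    (hw : ∀ i, w i = (Finset.univ.filter fun s : Finset {x // x ∈ G} =>
        s.card = i ∧ G1.IsClique (s : Set {x // x ∈ G})).card) :
    (∀ i, 1 ≤ i →
      w i = ∑ j ∈ Finset.Icc 1 (Fintype.card V), Nat.factorial i * stirling2 j i * v j) ∧
    (∀ j, 1 ≤ j →
      ∑ i ∈ Finset.Icc 1 j, (-1 : ℤ) ^ (i + 1) * (Nat.factorial i : ℤ) * (stirling2 j i : ℤ)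
        = (-1 : ℤ) ^ (j + 1)) ∧
    (∑ s : Finset {x // x ∈ G},
        if s.Nonempty ∧ G1.IsClique (s : Set {x // x ∈ G}) then (-1 : ℤ) ^ (s.card - 1) else 0)
      = ∑ x ∈ G, (-1 : ℤ) ^ (x.card - 1) := by
  rw [stirling2_eq_stirlingSecond]
  refine ⟨fun i hi => ?_, fun j hj => sum_Icc_neg_one_pow_mul_factorial_mul_stirlingSecond hj,
    sum_ite_isClique_neg_one_pow hne hdown hG1⟩
  have hcard : ∀ x ∈ G, #x ∈ Icc 1 (Fintype.card V) := fun x hx =>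
    mem_Icc.2 ⟨card_pos.2 (nonempty_iff_ne_empty.2 (hne x hx)), card_le_univ x⟩
  rw [hw, card_isClique_eq_sum_factorial_mul_stirlingSecond hne hdown hG1 hi,
    ← sum_fiberwise_of_maps_to' hcard fun j => i ! * j.stirlingSecond i]
  refine sum_congr rfl fun j _ => ?_
  rw [sum_const, hv, smul_eq_mul, mul_comm]
end
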